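/- arXiv:2104.13529 — 3 statements merged into one kernel-verified Lean document; each statement's English description precedes it below -/
import Mathlib

section
/- Let y ∈ ℤ with y ≥ 2, and let p, p′, r, r′ : ℤ → [0,1] and θ, θ′, κ, κ′ : ℤ → [0,2π) satisfy (for both the unprimed and primed families): p₀ = p_y = 1 (so q₀ = q_y = 0), θ₀ = 0, p_x < 1 for all 1 ≤ x ≤ y−1 (so q_x ≠ 0 for 1 ≤ x ≤ y−1), θ_x = 0 whenever p_x = 0, and κ_x = 0 whenever r_x = 0. Since q₀ = q_y = 0, the finite-dimensional subspace H_{[1,y]} = ⊕_{1≤x≤y} H_x is invariant under U_{p,r,θ,κ} and under U_{p′,r′,θ′,κ′}; let V and V′ denote their respective restrictions to H_{[1,y]}. Then V and V′ are unitarily equivalent via a unitary W on H_{[1,y]} with W H_x = H_x for all 1 ≤ x ≤ y if and only if p_x = p′_x, r_x = r′_x, θ_x = θ′_x and κ_x = κ′_x for all 1 ≤ x ≤ y. -/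
noncomputable section

/-- `H = ⊕_{x∈ℤ} H_x`, the ℓ² direct sum with each `H_x` a copy of `ℂ²`. -/
abbrev H : Type := lp (fun _ : ℤ × Fin 2 => ℂ) 2

/-- The canonical orthonormal basis vector `eᵢˣ` of `H_x` viewed in `H`. -/
def e (x : ℤ) (i : Fin 2) : H := lp.single 2 (x, i) 1

/-- The subspace `H_x` of `H`. -/
def Hx (x : ℤ) : Submodule ℂ H := Submodule.span ℂ {e x 0, e x 1}

/-- The rank-one operator `|u⟩⟨v| : w ↦ ⟨v, w⟩ u`. -/
def ketbra (u v : H) : H →L[ℂ] H := ((innerSL ℂ) v).smulRight u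

/-- The orthogonal projection of `H` onto `H_x`. -/
def P (x : ℤ) : H →L[ℂ] H := ketbra (e x 0) (e x 0) + ketbra (e x 1) (e x 1)

/-- A unitary (linear isometric equivalence) viewed as a continuous linear map. -/
def clm (U : H ≃ₗᵢ[ℂ] H) : H →L[ℂ] H := U.toLinearIsometry.toContinuousLinearMap

/-- `{u, v}` is an orthonormal basis of the two dimensional space `H_x`. -/
def ONBx (x : ℤ) (u v : H) : Prop :=
  u ∈ Hx x ∧ v ∈ Hx x ∧ ‖u‖ = 1 ∧ ‖v‖ = 1 ∧ (inner ℂ u v : ℂ) = 0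

/-- The SSQW conditions: `U H_x ⊆ H_{x-1} ⊕ H_x ⊕ H_{x+1}` and
`rank(P_{x±1} U P_x) ≤ 1` for all `x`. -/
def SSQW (U : H ≃ₗᵢ[ℂ] H) : Prop :=
  (∀ x : ℤ, ∀ ψ ∈ Hx x, U ψ ∈ Hx (x - 1) ⊔ Hx x ⊔ Hx (x + 1)) ∧
  (∀ x : ℤ, LinearMap.rank (((P (x + 1)).comp ((clm U).comp (P x))).toLinearMap) ≤ 1) ∧
  (∀ x : ℤ, LinearMap.rank (((P (x - 1)).comp ((clm U).comp (P x))).toLinearMap) ≤ 1)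

/-- Unitary equivalence of quantum walks: conjugation by a unitary `W`
preserving every `H_x`. -/
def UnitEquiv (U U' : H ≃ₗᵢ[ℂ] H) : Prop :=
  ∃ W : H ≃ₗᵢ[ℂ] H,
    (∀ x : ℤ, (Hx x).map (W.toLinearEquiv : H →ₗ[ℂ] H) = Hx x) ∧
    U' = (W.symm.trans U).trans W

/-- `V` is the quantum walk `U_{p,r,θ,κ}`: with `q_x = √(1-p_x²)` and
`s_x = √(1-r_x²)`, it sends `e^{iκ_x} r_x e₁ˣ + s_x e₂ˣ` to
`e^{iθ_x} p_x e₁ˣ + q_x e₂^{x+1}`, and `s_x e₁ˣ − e^{−iκ_x} r_x e₂ˣ` to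
`q_{x−1} e₁^{x−1} − e^{−iθ_{x−1}} p_{x−1} e₂ˣ`, for every `x ∈ ℤ`. -/
def IsUprtk (p r θ κ : ℤ → ℝ) (V : H ≃ₗᵢ[ℂ] H) : Prop :=
  ∀ x : ℤ,
    V ((Complex.exp (Complex.I * (κ x : ℂ)) * (r x : ℂ)) • e x 0
        + (Real.sqrt (1 - (r x) ^ 2) : ℂ) • e x 1)
      = (Complex.exp (Complex.I * (θ x : ℂ)) * (p x : ℂ)) • e x 0
        + (Real.sqrt (1 - (p x) ^ 2) : ℂ) • e (x + 1) 1 ∧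
    V ((Real.sqrt (1 - (r x) ^ 2) : ℂ) • e x 0
        - (Complex.exp (-(Complex.I * (κ x : ℂ))) * (r x : ℂ)) • e x 1)
      = (Real.sqrt (1 - (p (x - 1)) ^ 2) : ℂ) • e (x - 1) 0
        - (Complex.exp (-(Complex.I * (θ (x - 1) : ℂ))) * (p (x - 1) : ℂ)) • e x 1

/-- The finite-dimensional subspace `H_{[m,n]} = ⊕_{m ≤ x ≤ n} H_x` of `H`. -/
def Hicc (m n : ℤ) : Submodule ℂ H :=
  Submodule.span ℂ {v : H | ∃ x : ℤ, m ≤ x ∧ x ≤ n ∧ ∃ i : Fin 2, v = e x i}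

/-!
A unitary `W` with `W H_x = H_x` acts on each `H_x` by a `2 × 2` unitary `M_x`, and `W V = V' W`
on `H_{[1,y]}` becomes `M_a V_{ab} = V'_{ab} M_b` for the `2 × 2` blocks `V_{ab} = blk V a b`,
which are computed explicitly in `walkBlock`. For `1 ≤ x < y` we have `q_x ≠ 0`, so `V_{x,x+1}`
and `V_{x+1,x}` are nonzero with a single nonzero row. This kills one off-diagonal entry of every
`M_x`, `1 ≤ x ≤ y` (here `y ≥ 2` is needed), and unitarity kills the other. Hence `V'` arises from
`V` by a diagonal gauge `g` of unimodular numbers. Comparing moduli of entries gives `p = p'` and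
`r = r'`. The phases follow by induction on `x` from `θ₀ = θ'₀`, carrying along `g x 1 = g x 0`
whenever `s_x ≠ 0`: if `p_{x-1} ≠ 0` the diagonal block `V_{xx}` involves `θ_{x-1}`, which is
enough; if `p_{x-1} = 0` then `q_{x-1} = 1` and the blocks between `x - 1` and `x` give
`g x 1 = g (x - 1) 0` instead. The converse holds with `W = 1`.
-/

open Complex ComplexConjugate

lemma e_apply (x : ℤ) (i : Fin 2) (a : ℤ × Fin 2) :
    e x i a = if a = (x, i) then 1 else 0 := by
  simp [e, Pi.single_apply]

lemma inner_e_left (x : ℤ) (i : Fin 2) (v : H) : inner ℂ (e x i) v = v (x, i) := by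
  simp [e, lp.inner_single_left]

lemma inner_e_e (x z : ℤ) (i j : Fin 2) :
    inner ℂ (e x i) (e z j) = if (x, i) = (z, j) then 1 else 0 := by
  rw [inner_e_left, e_apply]

lemma e_mem_Hx (x : ℤ) (i : Fin 2) : e x i ∈ Hx x := by
  fin_cases i
  exacts [Submodule.subset_span (Or.inl rfl), Submodule.subset_span (Or.inr rfl)]

lemma Hx_le_Hicc {m n x : ℤ} (h1 : m ≤ x) (h2 : x ≤ n) : Hx x ≤ Hicc m n := by
  rw [Hx, Submodule.span_le]
  rintro v (rfl | rfl)
  exacts [Submodule.subset_span ⟨x, h1, h2, 0, rfl⟩, Submodule.subset_span ⟨x, h1, h2, 1, rfl⟩]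

lemma eq_sum_of_mem_Hx {x : ℤ} {v : H} (hv : v ∈ Hx x) : v = ∑ k, v (x, k) • e x k := by
  obtain ⟨a, b, rfl⟩ := Submodule.mem_span_pair.1 hv
  simp only [lp.coeFn_add, lp.coeFn_smul, Pi.add_apply, Pi.smul_apply, e_apply]
  simp [Fin.sum_univ_two]

lemma inner_eq_sum_of_mem_Hx {x : ℤ} {u : H} (hu : u ∈ Hx x) (v : H) :
    inner ℂ u v = ∑ k, conj (u (x, k)) * v (x, k) := by
  conv_lhs => rw [eq_sum_of_mem_Hx hu]
  simp [inner_e_left, mul_comm]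

lemma apply_eq_sum_of_map_eq {W : H ≃ₗᵢ[ℂ] H} {x : ℤ}
    (hW : (Hx x).map (W.toLinearEquiv : H →ₗ[ℂ] H) = Hx x) (v : H) (i : Fin 2) :
    W v (x, i) = ∑ k, W (e x k) (x, i) * v (x, k) := by
  have hmem : W.symm (e x i) ∈ Hx x := by
    obtain ⟨u, hu, hWu⟩ : e x i ∈ (Hx x).map (W.toLinearEquiv : H →ₗ[ℂ] H) := by
      rw [hW]; exact e_mem_Hx x i
    convert hu
    rw [← hWu]; simp
  rw [← inner_e_left, ← W.symm_symm, ← W.symm.inner_map_eq_flip, inner_eq_sum_of_mem_Hx hmem]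
  congr 1 with k
  rw [← inner_e_left, inner_conj_symm, W.symm.inner_map_eq_flip,
    W.symm_symm, inner_e_left]

def blk (T : H → H) (a b : ℤ) : Matrix (Fin 2) (Fin 2) ℂ := Matrix.of fun i j => T (e b j) (a, i)

lemma mem_Hx_of_map_eq {W : H ≃ₗᵢ[ℂ] H} {x : ℤ}
    (hW : (Hx x).map (W.toLinearEquiv : H →ₗ[ℂ] H) = Hx x) (i : Fin 2) : W (e x i) ∈ Hx x :=
  hW ▸ Submodule.mem_map_of_mem (e_mem_Hx x i)

lemma blk_mul_blk_eq {W V V' : H ≃ₗᵢ[ℂ] H} {a b : ℤ}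
    (ha : (Hx a).map (W.toLinearEquiv : H →ₗ[ℂ] H) = Hx a) (hb : ∀ j, W (e b j) ∈ Hx b)
    (h : ∀ j, W (V (e b j)) = V' (W (e b j))) :
    blk W a a * blk V a b = blk V' a b * blk W b b := by
  ext i j
  have hWe := congrArg V' (eq_sum_of_mem_Hx (hb j))
  rw [map_sum] at hWe
  simp only [map_smul] at hWe
  rw [Matrix.mul_apply, Matrix.mul_apply]
  simp only [blk, Matrix.of_apply]
  rw [← apply_eq_sum_of_map_eq ha, h j, hWe, lp.coeFn_sum, Finset.sum_apply]
  simp [lp.coeFn_smul, mul_comm]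

lemma blk_mem_unitaryGroup {W : H ≃ₗᵢ[ℂ] H} {x : ℤ} (hx : ∀ j, W (e x j) ∈ Hx x) :
    blk W x x ∈ Matrix.unitaryGroup (Fin 2) ℂ := by
  rw [Matrix.mem_unitaryGroup_iff']
  ext i j
  rw [Matrix.mul_apply]
  simp only [blk, Matrix.star_apply, Matrix.of_apply, RCLike.star_def]
  rw [← inner_eq_sum_of_mem_Hx (hx i), W.inner_map_map, inner_e_e, Matrix.one_apply]
  simp

lemma Matrix.isDiag_of_mem_unitaryGroup_fin_two {M : Matrix (Fin 2) (Fin 2) ℂ}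
    (hM : M ∈ Matrix.unitaryGroup (Fin 2) ℂ) (h : M 1 0 = 0 ∨ M 0 1 = 0) :
    M.IsDiag ∧ ∀ i, ‖M i i‖ = 1 := by
  have hMM := Matrix.mem_unitaryGroup_iff'.1 hM
  have e00 := congrFun₂ hMM 0 0
  have e01 := congrFun₂ hMM 0 1
  have e11 := congrFun₂ hMM 1 1
  simp only [Matrix.mul_apply, Fin.sum_univ_two, Matrix.star_apply, RCLike.star_def,
    conj_mul', Matrix.one_apply_eq] at e00 e01 e11
  replace e00 : ‖M 0 0‖ ^ 2 + ‖M 1 0‖ ^ 2 = 1 := by exact_mod_cast e00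
  replace e11 : ‖M 0 1‖ ^ 2 + ‖M 1 1‖ ^ 2 = 1 := by exact_mod_cast e11
  obtain ⟨h01, h10⟩ : M 0 1 = 0 ∧ M 1 0 = 0 := by
    rcases h with h | h
    · have h00 : M 0 0 ≠ 0 := by rintro h00; simp [h00, h] at e00
      simpa [h, h00] using e01
    · have h11 : M 1 1 ≠ 0 := by rintro h11; simp [h11, h] at e11
      simpa [h, h11] using e01
  refine ⟨fun i j hij => ?_, fun i => ?_⟩
  · fin_cases i <;> fin_cases j <;> simp_all
  · rw [h10] at e00
    rw [h01] at e11
    fin_cases i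
    · simpa [pow_eq_one_iff_of_nonneg] using e00
    · simpa [pow_eq_one_iff_of_nonneg] using e11

def walkBlock (p r θ κ : ℤ → ℝ) (a b : ℤ) : Matrix (Fin 2) (Fin 2) ℂ :=
  if a = b - 1 then
    !![(√(1 - r b ^ 2) : ℂ) * (√(1 - p (b - 1) ^ 2) : ℂ),
        -(exp (I * κ b) * r b * (√(1 - p (b - 1) ^ 2) : ℂ)); 0, 0]
  else if a = b then
    !![exp (-(I * κ b)) * r b * (exp (I * θ b) * p b), (√(1 - r b ^ 2) : ℂ) * (exp (I * θ b) * p b);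
      -((√(1 - r b ^ 2) : ℂ) * (exp (-(I * θ (b - 1))) * p (b - 1))),
        exp (I * κ b) * r b * (exp (-(I * θ (b - 1))) * p (b - 1))]
  else if a = b + 1 then
    !![0, 0; exp (-(I * κ b)) * r b * (√(1 - p b ^ 2) : ℂ),
      (√(1 - r b ^ 2) : ℂ) * (√(1 - p b ^ 2) : ℂ)]
  else 0

section WalkBlock

variable (p r θ κ : ℤ → ℝ) (b : ℤ)

@[simp] lemma walkBlock_sub_one :
    walkBlock p r θ κ (b - 1) b =
      !![(√(1 - r b ^ 2) : ℂ) * (√(1 - p (b - 1) ^ 2) : ℂ),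
        -(exp (I * κ b) * r b * (√(1 - p (b - 1) ^ 2) : ℂ)); 0, 0] := by
  simp [walkBlock]

@[simp] lemma walkBlock_self :
    walkBlock p r θ κ b b =
      !![exp (-(I * κ b)) * r b * (exp (I * θ b) * p b),
          (√(1 - r b ^ 2) : ℂ) * (exp (I * θ b) * p b);
        -((√(1 - r b ^ 2) : ℂ) * (exp (-(I * θ (b - 1))) * p (b - 1))),
          exp (I * κ b) * r b * (exp (-(I * θ (b - 1))) * p (b - 1))] := by
  simp [walkBlock, show b ≠ b - 1 by omega]

@[simp] lemma walkBlock_add_one :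
    walkBlock p r θ κ (b + 1) b =
      !![0, 0; exp (-(I * κ b)) * r b * (√(1 - p b ^ 2) : ℂ),
        (√(1 - r b ^ 2) : ℂ) * (√(1 - p b ^ 2) : ℂ)] := by
  simp [walkBlock, show b + 1 ≠ b - 1 by omega]

end WalkBlock

section Walk

variable {p r θ κ : ℤ → ℝ} {V : H ≃ₗᵢ[ℂ] H}

lemma IsUprtk.apply_e_zero (hV : IsUprtk p r θ κ V) {x : ℤ} (hr : r x ^ 2 ≤ 1) :
    V (e x 0) =
      ((√(1 - r x ^ 2) : ℂ) * (√(1 - p (x - 1) ^ 2) : ℂ)) • e (x - 1) 0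
      + (exp (-(I * κ x)) * r x * (exp (I * θ x) * p x)) • e x 0
      - ((√(1 - r x ^ 2) : ℂ) * (exp (-(I * θ (x - 1))) * p (x - 1))) • e x 1
      + (exp (-(I * κ x)) * r x * (√(1 - p x ^ 2) : ℂ)) • e (x + 1) 1 := by
  have hs : (√(1 - r x ^ 2) : ℂ) ^ 2 = 1 - (r x : ℂ) ^ 2 := by
    rw [← ofReal_pow, Real.sq_sqrt (by linarith)]; push_cast; ring
  have hk : exp (-(I * κ x)) * exp (I * κ x) = 1 := by rw [← exp_add]; simp
  have he : e x 0 = (exp (-(I * κ x)) * r x) •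
        ((exp (I * κ x) * r x) • e x 0 + (√(1 - r x ^ 2) : ℂ) • e x 1)
      + (√(1 - r x ^ 2) : ℂ) •
        ((√(1 - r x ^ 2) : ℂ) • e x 0 - (exp (-(I * κ x)) * r x) • e x 1) := by
    match_scalars
    · linear_combination (-(r x : ℂ) ^ 2) * hk - hs
    · ring
  conv_lhs => rw [he]
  rw [map_add, map_smul, map_smul, (hV x).1, (hV x).2]
  module

lemma IsUprtk.apply_e_one (hV : IsUprtk p r θ κ V) {x : ℤ} (hr : r x ^ 2 ≤ 1) :
    V (e x 1) =
      (-(exp (I * κ x) * r x * (√(1 - p (x - 1) ^ 2) : ℂ))) • e (x - 1) 0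
      + ((√(1 - r x ^ 2) : ℂ) * (exp (I * θ x) * p x)) • e x 0
      + (exp (I * κ x) * r x * (exp (-(I * θ (x - 1))) * p (x - 1))) • e x 1
      + ((√(1 - r x ^ 2) : ℂ) * (√(1 - p x ^ 2) : ℂ)) • e (x + 1) 1 := by
  have hs : (√(1 - r x ^ 2) : ℂ) ^ 2 = 1 - (r x : ℂ) ^ 2 := by
    rw [← ofReal_pow, Real.sq_sqrt (by linarith)]; push_cast; ring
  have hk : exp (-(I * κ x)) * exp (I * κ x) = 1 := by rw [← exp_add]; simp
  have he : e x 1 = (√(1 - r x ^ 2) : ℂ) •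
        ((exp (I * κ x) * r x) • e x 0 + (√(1 - r x ^ 2) : ℂ) • e x 1)
      - (exp (I * κ x) * r x) •
        ((√(1 - r x ^ 2) : ℂ) • e x 0 - (exp (-(I * κ x)) * r x) • e x 1) := by
    match_scalars
    · linear_combination (-(r x : ℂ) ^ 2) * hk - hs
    · ring
  conv_lhs => rw [he]
  rw [map_sub, map_smul, map_smul, (hV x).1, (hV x).2]
  module

lemma IsUprtk.blk_eq (hV : IsUprtk p r θ κ V) {b : ℤ} (hr : r b ^ 2 ≤ 1) (a : ℤ) :
    blk V a b = walkBlock p r θ κ a b := by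
  ext i j
  unfold walkBlock
  split_ifs <;> subst_vars <;> fin_cases i <;> fin_cases j <;>
    simp only [blk, Matrix.of_apply, Fin.zero_eta, Fin.mk_one, Fin.isValue, hV.apply_e_zero hr,
      hV.apply_e_one hr, lp.coeFn_add, lp.coeFn_sub, lp.coeFn_smul, Pi.add_apply,
      Pi.sub_apply, Pi.smul_apply, smul_eq_mul, e_apply] <;>
    simp [*] <;> intro <;> omega

end Walk

def IsDiagGauge (y : ℤ) (g : ℤ → Fin 2 → ℂ) (A A' : ℤ → ℤ → Matrix (Fin 2) (Fin 2) ℂ) : Prop :=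
  ∀ a ∈ Set.Icc 1 y, ∀ b ∈ Set.Icc 1 y, ∀ i j, g a i * A a b i j = A' a b i j * g b j

lemma ne_zero_of_sqrt_one_sub_sq_eq_zero {a : ℝ} (h : √(1 - a ^ 2) = 0) : a ≠ 0 := by
  rintro rfl
  simp at h

lemma isDiag_of_mul_walkBlock_eq {y : ℤ} (hy : 2 ≤ y) {p r θ κ p' r' θ' κ' : ℤ → ℝ}
    {M : ℤ → Matrix (Fin 2) (Fin 2) ℂ}
    (hM : ∀ x ∈ Set.Icc 1 y, M x ∈ Matrix.unitaryGroup (Fin 2) ℂ)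
    (hMA : ∀ a ∈ Set.Icc 1 y, ∀ b ∈ Set.Icc 1 y,
      M a * walkBlock p r θ κ a b = walkBlock p' r' θ' κ' a b * M b)
    (hq : ∀ x, 1 ≤ x → x ≤ y - 1 → √(1 - p x ^ 2) ≠ 0) {x : ℤ} (hx : x ∈ Set.Icc 1 y) :
    (M x).IsDiag ∧ ∀ i, ‖M x i i‖ = 1 := by
  obtain ⟨hx1, hxy⟩ := hx
  refine Matrix.isDiag_of_mem_unitaryGroup_fin_two (hM x ⟨hx1, hxy⟩) ?_
  rcases lt_or_eq_of_le hxy with hlt | rfl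
  · left
    have h := hMA (x + 1 - 1) ⟨by omega, by omega⟩ (x + 1) ⟨by omega, by omega⟩
    rw [walkBlock_sub_one, walkBlock_sub_one, add_sub_cancel_right] at h
    have h0 : M x 1 0 = 0 ∨ √(1 - r (x + 1) ^ 2) = 0 := by
      simpa [Matrix.mul_apply, hq x hx1 (by omega)] using congrFun₂ h 1 0
    have h1 : M x 1 0 = 0 ∨ r (x + 1) = 0 := by
      simpa [Matrix.mul_apply, hq x hx1 (by omega)] using congrFun₂ h 1 1
    by_contra hne
    exact ne_zero_of_sqrt_one_sub_sq_eq_zero (h0.resolve_left hne) (h1.resolve_left hne)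
  · right
    have h := hMA (x - 1 + 1) ⟨by omega, by omega⟩ (x - 1) ⟨by omega, by omega⟩
    rw [walkBlock_add_one, walkBlock_add_one, sub_add_cancel] at h
    have h0 : M x 0 1 = 0 ∨ r (x - 1) = 0 := by
      simpa [Matrix.mul_apply, hq (x - 1) (by omega) (by omega)] using congrFun₂ h 0 0
    have h1 : M x 0 1 = 0 ∨ √(1 - r (x - 1) ^ 2) = 0 := by
      simpa [Matrix.mul_apply, hq (x - 1) (by omega) (by omega)] using congrFun₂ h 0 1
    by_contra hne
    exact ne_zero_of_sqrt_one_sub_sq_eq_zero (h1.resolve_left hne) (h0.resolve_left hne)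

lemma isDiagGauge_of_mul_walkBlock_eq {y : ℤ} (hy : 2 ≤ y) {p r θ κ p' r' θ' κ' : ℤ → ℝ}
    {M : ℤ → Matrix (Fin 2) (Fin 2) ℂ}
    (hM : ∀ x ∈ Set.Icc 1 y, M x ∈ Matrix.unitaryGroup (Fin 2) ℂ)
    (hMA : ∀ a ∈ Set.Icc 1 y, ∀ b ∈ Set.Icc 1 y,
      M a * walkBlock p r θ κ a b = walkBlock p' r' θ' κ' a b * M b)
    (hq : ∀ x, 1 ≤ x → x ≤ y - 1 → √(1 - p x ^ 2) ≠ 0) :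
    (∀ x ∈ Set.Icc 1 y, ∀ i, ‖M x i i‖ = 1) ∧
      IsDiagGauge y (fun x i => M x i i) (walkBlock p r θ κ) (walkBlock p' r' θ' κ') := by
  have hdiag := fun x (hx : x ∈ Set.Icc 1 y) => isDiag_of_mul_walkBlock_eq hy hM hMA hq hx
  refine ⟨fun x hx => (hdiag x hx).2, fun a ha b hb i j => ?_⟩
  have h := congrFun₂ (hMA a ha b hb) i j
  rwa [← (hdiag a ha).1.diagonal_diag, ← (hdiag b hb).1.diagonal_diag, Matrix.diagonal_mul,
    Matrix.mul_diagonal] at h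

lemma IsDiagGauge.norm_eq {y : ℤ} {g : ℤ → Fin 2 → ℂ} {A A' : ℤ → ℤ → Matrix (Fin 2) (Fin 2) ℂ}
    (hg : IsDiagGauge y g A A') (hg1 : ∀ x ∈ Set.Icc 1 y, ∀ i, ‖g x i‖ = 1)
    {a b : ℤ} (ha : a ∈ Set.Icc 1 y) (hb : b ∈ Set.Icc 1 y) (i j : Fin 2) :
    ‖A a b i j‖ = ‖A' a b i j‖ := by
  simpa [hg1 a ha, hg1 b hb] using congrArg norm (hg a ha b hb i j)

lemma IsDiagGauge.amplitudes_eq {y : ℤ} {g : ℤ → Fin 2 → ℂ} {p r θ κ p' r' θ' κ' : ℤ → ℝ}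
    (hg : IsDiagGauge y g (walkBlock p r θ κ) (walkBlock p' r' θ' κ'))
    (hg1 : ∀ x ∈ Set.Icc 1 y, ∀ i, ‖g x i‖ = 1) (hpy : p y = 1) {x : ℤ} (hx : x ∈ Set.Icc 1 y)
    (hp : 0 ≤ p x) (hp' : 0 ≤ p' x) (hr : r x ∈ Set.Icc 0 1) (hr' : r' x ∈ Set.Icc 0 1) :
    p x = p' x ∧ r x = r' x := by
  have h00 : r x * p x = r' x * p' x := by
    simpa [norm_exp, abs_of_nonneg hp, abs_of_nonneg hp', abs_of_nonneg hr.1,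
      abs_of_nonneg hr'.1] using hg.norm_eq hg1 hx hx 0 0
  have h01 : √(1 - r x ^ 2) * p x = √(1 - r' x ^ 2) * p' x := by
    simpa [norm_exp, abs_of_nonneg hp, abs_of_nonneg hp', abs_of_nonneg (Real.sqrt_nonneg _)]
      using hg.norm_eq hg1 hx hx 0 1
  -- `p² = (r p)² + (s p)²` since `r² + s² = 1`
  have hs := Real.sq_sqrt (show 0 ≤ 1 - r x ^ 2 by nlinarith [hr.1, hr.2])
  have hs' := Real.sq_sqrt (show 0 ≤ 1 - r' x ^ 2 by nlinarith [hr'.1, hr'.2])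
  have hpp : p x = p' x := by
    refine (pow_left_inj₀ hp hp' two_ne_zero).1 ?_
    linear_combination (r x * p x + r' x * p' x) * h00
      + (√(1 - r x ^ 2) * p x + √(1 - r' x ^ 2) * p' x) * h01 - p x ^ 2 * hs + p' x ^ 2 * hs'
  refine ⟨hpp, ?_⟩
  rcases eq_or_ne (p x) 0 with h0 | h0
  · have hxy : x + 1 ∈ Set.Icc 1 y := by
      obtain ⟨hx1, hxy⟩ := hx
      refine ⟨by omega, lt_of_le_of_ne hxy ?_⟩
      rintro rfl
      simp [hpy] at h0
    have h10 := hg.norm_eq hg1 hxy hx 1 0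
    simpa [norm_exp, ← hpp, h0, abs_of_nonneg hr.1, abs_of_nonneg hr'.1] using h10
  · exact mul_right_cancel₀ h0 (hpp ▸ h00)

lemma eq_of_exp_I_mul_eq {a b : ℝ} (ha : a ∈ Set.Ico 0 (2 * Real.pi))
    (hb : b ∈ Set.Ico 0 (2 * Real.pi)) (h : exp (I * a) = exp (I * b)) : a = b :=
  Circle.exp_injOn_Ico (by simp) ha hb (Circle.ext (by simpa [Circle.coe_exp, mul_comm] using h))

lemma sqrt_one_sub_sq_eq_one {a : ℝ} (h : a = 0) : √(1 - a ^ 2) = 1 := by simp [h]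

def IsNormalizedPhase (a t : ℝ) : Prop := t ∈ Set.Ico 0 (2 * Real.pi) ∧ (a = 0 → t = 0)

lemma IsNormalizedPhase.eq {a t t' : ℝ} (ht : IsNormalizedPhase a t) (ht' : IsNormalizedPhase a t')
    (h : a ≠ 0 → exp (I * t) = exp (I * t')) : t = t' := by
  rcases eq_or_ne a 0 with ha | ha
  · rw [ht.2 ha, ht'.2 ha]
  · exact eq_of_exp_I_mul_eq ht.1 ht'.1 (h ha)

section Phases

variable {y : ℤ} {g : ℤ → Fin 2 → ℂ} {p r θ κ θ' κ' : ℤ → ℝ}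

lemma IsDiagGauge.gauge_link (hg : IsDiagGauge y g (walkBlock p r θ κ) (walkBlock p r θ' κ'))
    {z : ℤ} (hz : z ∈ Set.Icc 1 y) (hz1 : z + 1 ∈ Set.Icc 1 y)
    (hpz : p z = 0) (hκz : κ z = κ' z) (hgz : √(1 - r z ^ 2) ≠ 0 → g z 1 = g z 0) :
    g (z + 1) 1 = g z 0 := by
  have h₁₀ := hg (z + 1) hz1 z hz 1 0
  have h₁₁ := hg (z + 1) hz1 z hz 1 1
  simp only [walkBlock_add_one, Matrix.of_apply, Matrix.cons_val_one, Matrix.cons_val_zero,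
    sqrt_one_sub_sq_eq_one hpz, ofReal_one, mul_one, ← hκz] at h₁₀ h₁₁
  rcases eq_or_ne (r z) 0 with hr | hr
  · simp only [sqrt_one_sub_sq_eq_one hr, ofReal_one, mul_one, one_mul] at h₁₁
    rw [h₁₁, hgz (by simp [hr])]
  · exact mul_left_cancel₀ (mul_ne_zero (exp_ne_zero _) (ofReal_ne_zero.2 hr))
      (by linear_combination h₁₀)

lemma IsDiagGauge.kappa_eq_and_gauge_eq
    (hg : IsDiagGauge y g (walkBlock p r θ κ) (walkBlock p r θ' κ'))
    (hg0 : ∀ x ∈ Set.Icc 1 y, ∀ i, g x i ≠ 0) {x : ℤ} (hx : x ∈ Set.Icc 1 y)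
    (hκ : IsNormalizedPhase (r x) (κ x)) (hκ' : IsNormalizedPhase (r x) (κ' x))
    (hprev : p (x - 1) ≠ 0 ∧ θ (x - 1) = θ' (x - 1) ∨
      p (x - 1) = 0 ∧ x - 1 ∈ Set.Icc 1 y ∧ g x 1 = g (x - 1) 0) :
    κ x = κ' x ∧ (√(1 - r x ^ 2) ≠ 0 → g x 1 = g x 0) := by
  refine ⟨hκ.eq hκ' fun hr => ?_, fun hs => ?_⟩
  · rcases hprev with ⟨hp, hθ⟩ | ⟨hp, hx1, hlink⟩
    · have h₁₁ := hg x hx x hx 1 1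
      simp only [walkBlock_self, Matrix.of_apply, Matrix.cons_val_one, Matrix.cons_val_zero,
        ← hθ] at h₁₁
      have hc : g x 1 * r x * exp (-(I * θ (x - 1))) * p (x - 1) ≠ 0 := by
        simp [hg0 x hx 1, hr, hp, exp_ne_zero]
      exact mul_left_cancel₀ hc (by linear_combination h₁₁)
    · have h₀₁ := hg (x - 1) hx1 x hx 0 1
      simp only [walkBlock_sub_one, Matrix.of_apply, Matrix.cons_val_one, Matrix.cons_val_zero,
        sqrt_one_sub_sq_eq_one hp, ofReal_one, mul_one, hlink] at h₀₁
      have hc : g (x - 1) 0 * r x ≠ 0 := by simp [hg0 (x - 1) hx1 0, hr]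
      exact mul_left_cancel₀ hc (by linear_combination -h₀₁)
  · rcases hprev with ⟨hp, hθ⟩ | ⟨hp, hx1, hlink⟩
    · have h₁₀ := hg x hx x hx 1 0
      simp only [walkBlock_self, Matrix.of_apply, Matrix.cons_val_one, Matrix.cons_val_zero,
        ← hθ] at h₁₀
      have hc : (√(1 - r x ^ 2) : ℂ) * exp (-(I * θ (x - 1))) * p (x - 1) ≠ 0 := by
        simp [hs, hp, exp_ne_zero]
      exact mul_right_cancel₀ hc (by linear_combination -h₁₀)
    · have h₀₀ := hg (x - 1) hx1 x hx 0 0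
      simp only [walkBlock_sub_one, Matrix.of_apply, Matrix.cons_val_zero,
        sqrt_one_sub_sq_eq_one hp, ofReal_one, mul_one] at h₀₀
      rw [hlink]
      exact mul_right_cancel₀ (ofReal_ne_zero.2 hs) (by linear_combination h₀₀)

lemma IsDiagGauge.theta_eq (hg : IsDiagGauge y g (walkBlock p r θ κ) (walkBlock p r θ' κ'))
    (hg0 : ∀ x ∈ Set.Icc 1 y, ∀ i, g x i ≠ 0) {x : ℤ} (hx : x ∈ Set.Icc 1 y)
    (hθ : IsNormalizedPhase (p x) (θ x)) (hθ' : IsNormalizedPhase (p x) (θ' x))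
    (hκx : κ x = κ' x) (hgx : √(1 - r x ^ 2) ≠ 0 → g x 1 = g x 0) : θ x = θ' x := by
  refine hθ.eq hθ' fun hp => ?_
  by_cases hs : √(1 - r x ^ 2) = 0
  · have h₀₀ := hg x hx x hx 0 0
    simp only [walkBlock_self, Matrix.of_apply, Matrix.cons_val_zero, ← hκx] at h₀₀
    have hc : g x 0 * exp (-(I * κ x)) * r x * p x ≠ 0 := by
      simp [hg0 x hx 0, ne_zero_of_sqrt_one_sub_sq_eq_zero hs, hp, exp_ne_zero]
    exact mul_left_cancel₀ hc (by linear_combination h₀₀)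
  · have h₀₁ := hg x hx x hx 0 1
    simp only [walkBlock_self, Matrix.of_apply, Matrix.cons_val_one, Matrix.cons_val_zero,
      hgx hs] at h₀₁
    have hc : g x 0 * √(1 - r x ^ 2) * p x ≠ 0 := by simp [hg0 x hx 0, hs, hp]
    exact mul_left_cancel₀ hc (by linear_combination h₀₁)

lemma IsDiagGauge.phases_eq (hg : IsDiagGauge y g (walkBlock p r θ κ) (walkBlock p r θ' κ'))
    (hg0 : ∀ x ∈ Set.Icc 1 y, ∀ i, g x i ≠ 0) (hp0 : p 0 = 1) (hθ0 : θ 0 = θ' 0)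
    (hθ : ∀ x ∈ Set.Icc 1 y, IsNormalizedPhase (p x) (θ x))
    (hθ' : ∀ x ∈ Set.Icc 1 y, IsNormalizedPhase (p x) (θ' x))
    (hκ : ∀ x ∈ Set.Icc 1 y, IsNormalizedPhase (r x) (κ x))
    (hκ' : ∀ x ∈ Set.Icc 1 y, IsNormalizedPhase (r x) (κ' x)) :
    ∀ x ∈ Set.Icc 1 y, θ x = θ' x ∧ κ x = κ' x ∧ (√(1 - r x ^ 2) ≠ 0 → g x 1 = g x 0) := by
  have step : ∀ x ∈ Set.Icc 1 y, (p (x - 1) ≠ 0 ∧ θ (x - 1) = θ' (x - 1) ∨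
      p (x - 1) = 0 ∧ x - 1 ∈ Set.Icc 1 y ∧ g x 1 = g (x - 1) 0) →
      θ x = θ' x ∧ κ x = κ' x ∧ (√(1 - r x ^ 2) ≠ 0 → g x 1 = g x 0) := fun x hx hprev =>
    have ⟨hκx, hgx⟩ := hg.kappa_eq_and_gauge_eq hg0 hx (hκ x hx) (hκ' x hx) hprev
    ⟨hg.theta_eq hg0 hx (hθ x hx) (hθ' x hx) hκx hgx, hκx, hgx⟩
  rintro x ⟨hx1, hxy⟩
  induction x, hx1 using Int.leInduction with
  | base => exact step 1 ⟨le_rfl, hxy⟩ (Or.inl ⟨by simp [hp0], hθ0⟩)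
  | succ n hn ih =>
    obtain ⟨hθn, hκn, hgn⟩ := ih (by omega)
    refine step (n + 1) ⟨by omega, hxy⟩ ?_
    rw [add_sub_cancel_right]
    rcases eq_or_ne (p n) 0 with hp | hp
    · exact Or.inr ⟨hp, ⟨hn, by omega⟩, hg.gauge_link ⟨hn, by omega⟩ ⟨by omega, hxy⟩ hp hκn hgn⟩
    · exact Or.inl ⟨hp, hθn⟩

end Phases

lemma walkBlock_congr {p r p' r' : ℤ → ℝ} (θ κ : ℤ → ℝ) {a b : ℤ}
    (hp₁ : p (b - 1) = p' (b - 1)) (hp₂ : p b = p' b) (hr : r b = r' b) :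
    walkBlock p r θ κ a b = walkBlock p' r' θ κ a b := by
  simp only [walkBlock, hp₁, hp₂, hr]

lemma IsDiagGauge.congr_right {y : ℤ} {g : ℤ → Fin 2 → ℂ}
    {A A' A'' : ℤ → ℤ → Matrix (Fin 2) (Fin 2) ℂ} (hg : IsDiagGauge y g A A')
    (h : ∀ a ∈ Set.Icc 1 y, ∀ b ∈ Set.Icc 1 y, A' a b = A'' a b) : IsDiagGauge y g A A'' :=
  fun a ha b hb i j => h a ha b hb ▸ hg a ha b hb i j

theorem walk_params_eq_of_isDiagGauge {y : ℤ} {g : ℤ → Fin 2 → ℂ}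
    {p p' r r' θ θ' κ κ' : ℤ → ℝ}
    (hg : IsDiagGauge y g (walkBlock p r θ κ) (walkBlock p' r' θ' κ'))
    (hg1 : ∀ x ∈ Set.Icc 1 y, ∀ i, ‖g x i‖ = 1)
    (hp : ∀ x, 0 ≤ p x) (hp' : ∀ x, 0 ≤ p' x)
    (hr : ∀ x, r x ∈ Set.Icc (0 : ℝ) 1) (hr' : ∀ x, r' x ∈ Set.Icc (0 : ℝ) 1)
    (hθ : ∀ x, IsNormalizedPhase (p x) (θ x)) (hθ' : ∀ x, IsNormalizedPhase (p' x) (θ' x))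
    (hκ : ∀ x, IsNormalizedPhase (r x) (κ x)) (hκ' : ∀ x, IsNormalizedPhase (r' x) (κ' x))
    (hp0 : p 0 = 1) (hp0' : p' 0 = 1) (hpy : p y = 1) (hθ0 : θ 0 = θ' 0) :
    ∀ x ∈ Set.Icc 1 y, p x = p' x ∧ r x = r' x ∧ θ x = θ' x ∧ κ x = κ' x := by
  have hpr : ∀ x ∈ Set.Icc 1 y, p x = p' x ∧ r x = r' x := fun x hx =>
    hg.amplitudes_eq hg1 hpy hx (hp x) (hp' x) (hr x) (hr' x)
  have hpred : ∀ x ∈ Set.Icc 1 y, p (x - 1) = p' (x - 1) := by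
    rintro x ⟨hx1, hxy⟩
    rcases eq_or_lt_of_le hx1 with rfl | hlt
    · simp [hp0, hp0']
    · exact (hpr (x - 1) ⟨by omega, by omega⟩).1
  have hg' : IsDiagGauge y g (walkBlock p r θ κ) (walkBlock p r θ' κ') :=
    hg.congr_right fun a _ b hb =>
      (walkBlock_congr θ' κ' (hpred b hb) (hpr b hb).1 (hpr b hb).2).symm
  have hph := hg'.phases_eq (fun x hx i => norm_ne_zero_iff.1 (by simp [hg1 x hx i])) hp0 hθ0
    (fun x _ => hθ x) (fun x hx => (hpr x hx).1 ▸ hθ' x) (fun x _ => hκ x)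
    (fun x hx => (hpr x hx).2 ▸ hκ' x)
  exact fun x hx => ⟨(hpr x hx).1, (hpr x hx).2, (hph x hx).1, (hph x hx).2.1⟩

lemma exists_isDiagGauge_of_conj {y : ℤ} (hy : 2 ≤ y) {p p' r r' θ θ' κ κ' : ℤ → ℝ}
    {V V' W : H ≃ₗᵢ[ℂ] H} (hV : IsUprtk p r θ κ V) (hV' : IsUprtk p' r' θ' κ' V')
    (hr : ∀ x, r x ^ 2 ≤ 1) (hr' : ∀ x, r' x ^ 2 ≤ 1)
    (hq : ∀ x, 1 ≤ x → x ≤ y - 1 → √(1 - p x ^ 2) ≠ 0)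
    (hW : ∀ x, 1 ≤ x → x ≤ y → (Hx x).map (W.toLinearEquiv : H →ₗ[ℂ] H) = Hx x)
    (hWV : ∀ ψ ∈ Hicc 1 y, W (V (W.symm ψ)) = V' ψ) :
    ∃ g : ℤ → Fin 2 → ℂ, (∀ x ∈ Set.Icc 1 y, ∀ i, ‖g x i‖ = 1) ∧
      IsDiagGauge y g (walkBlock p r θ κ) (walkBlock p' r' θ' κ') := by
  have hWe : ∀ b ∈ Set.Icc 1 y, ∀ j, W (e b j) ∈ Hx b := fun b hb =>
    mem_Hx_of_map_eq (hW b hb.1 hb.2)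
  refine ⟨_, isDiagGauge_of_mul_walkBlock_eq hy (fun x hx => blk_mem_unitaryGroup (hWe x hx))
    (fun a ha b hb => ?_) hq⟩
  rw [← hV.blk_eq (hr b), ← hV'.blk_eq (hr' b)]
  refine blk_mul_blk_eq (hW a ha.1 ha.2) (hWe b hb) fun j => ?_
  simpa using hWV (W (e b j)) (Hx_le_Hicc hb.1 hb.2 (hWe b hb j))

lemma IsUprtk.eqOn_Hicc {y : ℤ} {p p' r r' θ θ' κ κ' : ℤ → ℝ} {V V' : H ≃ₗᵢ[ℂ] H}
    (hV : IsUprtk p r θ κ V) (hV' : IsUprtk p' r' θ' κ' V')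
    (hr : ∀ x, r x ^ 2 ≤ 1) (hr' : ∀ x, r' x ^ 2 ≤ 1) (hp0 : p 0 = p' 0) (hθ0 : θ 0 = θ' 0)
    (h : ∀ x, 1 ≤ x → x ≤ y → p x = p' x ∧ r x = r' x ∧ θ x = θ' x ∧ κ x = κ' x) :
    ∀ ψ ∈ Hicc 1 y, V ψ = V' ψ := by
  refine fun ψ hψ => LinearMap.eqOn_span (f := (V : H →ₗ[ℂ] H)) (g := (V' : H →ₗ[ℂ] H)) ?_ hψ
  rintro _ ⟨x, hx1, hxy, j, rfl⟩
  obtain ⟨hp₂, hr₂, hθ₂, hκ₂⟩ := h x hx1 hxy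
  obtain ⟨hp₁, hθ₁⟩ : p (x - 1) = p' (x - 1) ∧ θ (x - 1) = θ' (x - 1) := by
    rcases eq_or_lt_of_le hx1 with rfl | hlt
    · simpa using ⟨hp0, hθ0⟩
    · exact ⟨(h (x - 1) (by omega) (by omega)).1, (h (x - 1) (by omega) (by omega)).2.2.1⟩
  fin_cases j
  · simp [hV.apply_e_zero (hr x), hV'.apply_e_zero (hr' x), hp₁, hp₂, hr₂, hθ₁, hθ₂, hκ₂]
  · simp [hV.apply_e_one (hr x), hV'.apply_e_one (hr' x), hp₁, hp₂, hr₂, hθ₁, hθ₂, hκ₂]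

theorem unitary_equiv_iff_case_four_general (y : ℤ) (hy : 2 ≤ y)
    (p p' r r' θ θ' κ κ' : ℤ → ℝ)
    (hp : ∀ x : ℤ, p x ∈ Set.Icc (0 : ℝ) 1) (hp' : ∀ x : ℤ, p' x ∈ Set.Icc (0 : ℝ) 1)
    (hr : ∀ x : ℤ, r x ∈ Set.Icc (0 : ℝ) 1) (hr' : ∀ x : ℤ, r' x ∈ Set.Icc (0 : ℝ) 1)
    (hθ : ∀ x : ℤ, θ x ∈ Set.Ico (0 : ℝ) (2 * Real.pi))
    (hθ' : ∀ x : ℤ, θ' x ∈ Set.Ico (0 : ℝ) (2 * Real.pi))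
    (hκ : ∀ x : ℤ, κ x ∈ Set.Ico (0 : ℝ) (2 * Real.pi))
    (hκ' : ∀ x : ℤ, κ' x ∈ Set.Ico (0 : ℝ) (2 * Real.pi))
    (hp0 : p 0 = 1) (hp0' : p' 0 = 1) (hpy : p y = 1)
    (hθ0 : θ 0 = 0) (hθ0' : θ' 0 = 0)
    (hq : ∀ x : ℤ, 1 ≤ x → x ≤ y - 1 → p x < 1)
    (hpθ : ∀ x : ℤ, p x = 0 → θ x = 0) (hpθ' : ∀ x : ℤ, p' x = 0 → θ' x = 0)
    (hrκ : ∀ x : ℤ, r x = 0 → κ x = 0) (hrκ' : ∀ x : ℤ, r' x = 0 → κ' x = 0)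
    (V V' : H ≃ₗᵢ[ℂ] H)
    (hV : IsUprtk p r θ κ V) (hV' : IsUprtk p' r' θ' κ' V') :
    (∃ W : H ≃ₗᵢ[ℂ] H,
        (∀ x : ℤ, 1 ≤ x → x ≤ y → (Hx x).map (W.toLinearEquiv : H →ₗ[ℂ] H) = Hx x) ∧
        (∀ ψ ∈ Hicc 1 y, W (V (W.symm ψ)) = V' ψ)) ↔
      (∀ x : ℤ, 1 ≤ x → x ≤ y →
        p x = p' x ∧ r x = r' x ∧ θ x = θ' x ∧ κ x = κ' x) := by
  have hq₀ : ∀ x, 1 ≤ x → x ≤ y - 1 → √(1 - p x ^ 2) ≠ 0 := fun x h1 h2 =>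
    Real.sqrt_ne_zero'.2 (by nlinarith [hq x h1 h2, (hp x).1])
  have hr₁ : ∀ x, r x ^ 2 ≤ 1 := fun x => pow_le_one₀ (hr x).1 (hr x).2
  have hr₁' : ∀ x, r' x ^ 2 ≤ 1 := fun x => pow_le_one₀ (hr' x).1 (hr' x).2
  constructor
  · rintro ⟨W, hW, hWV⟩
    obtain ⟨g, hg1, hg⟩ := exists_isDiagGauge_of_conj hy hV hV' hr₁ hr₁' hq₀ hW hWV
    exact fun x h1 h2 => walk_params_eq_of_isDiagGauge hg hg1 (fun x => (hp x).1)
      (fun x => (hp' x).1) hr hr' (fun x => ⟨hθ x, hpθ x⟩) (fun x => ⟨hθ' x, hpθ' x⟩)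
      (fun x => ⟨hκ x, hrκ x⟩) (fun x => ⟨hκ' x, hrκ' x⟩) hp0 hp0' hpy (hθ0.trans hθ0'.symm)
      x ⟨h1, h2⟩
  · intro h
    refine ⟨LinearIsometryEquiv.refl ℂ H, fun x _ _ => ?_, fun ψ hψ => ?_⟩
    · exact Submodule.map_id (Hx x)
    · exact hV.eqOn_Hicc hV' hr₁ hr₁' (hp0.trans hp0'.symm) (hθ0.trans hθ0'.symm) h ψ hψ

/-- **Theorem 3.7, Case (4).** Let `y ≥ 2` and suppose
`p₀ = p′₀ = p_y = p′_y = 1`, `θ₀ = θ′₀ = 0`, `p_x, p′_x < 1` for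
`1 ≤ x ≤ y−1`, and the conventions `θ_x = 0` when `p_x = 0`, `κ_x = 0` when
`r_x = 0` hold.  Then the restrictions of `U_{p,r,θ,κ}` and `U_{p′,r′,θ′,κ′}`
to the invariant subspace `H_{[1,y]}` are unitarily equivalent via a unitary
preserving each `H_x` (`1 ≤ x ≤ y`) iff `p_x = p′_x`, `r_x = r′_x`,
`θ_x = θ′_x` and `κ_x = κ′_x` for all `1 ≤ x ≤ y`. -/
theorem unitary_equiv_iff_case_four (y : ℤ) (hy : 2 ≤ y)
    (p p' r r' θ θ' κ κ' : ℤ → ℝ)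
    (hp : ∀ x : ℤ, p x ∈ Set.Icc (0 : ℝ) 1) (hp' : ∀ x : ℤ, p' x ∈ Set.Icc (0 : ℝ) 1)
    (hr : ∀ x : ℤ, r x ∈ Set.Icc (0 : ℝ) 1) (hr' : ∀ x : ℤ, r' x ∈ Set.Icc (0 : ℝ) 1)
    (hθ : ∀ x : ℤ, θ x ∈ Set.Ico (0 : ℝ) (2 * Real.pi))
    (hθ' : ∀ x : ℤ, θ' x ∈ Set.Ico (0 : ℝ) (2 * Real.pi))
    (hκ : ∀ x : ℤ, κ x ∈ Set.Ico (0 : ℝ) (2 * Real.pi))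
    (hκ' : ∀ x : ℤ, κ' x ∈ Set.Ico (0 : ℝ) (2 * Real.pi))
    (hp0 : p 0 = 1) (hp0' : p' 0 = 1) (hpy : p y = 1) (hpy' : p' y = 1)
    (hθ0 : θ 0 = 0) (hθ0' : θ' 0 = 0)
    (hq : ∀ x : ℤ, 1 ≤ x → x ≤ y - 1 → p x < 1)
    (hq' : ∀ x : ℤ, 1 ≤ x → x ≤ y - 1 → p' x < 1)
    (hpθ : ∀ x : ℤ, p x = 0 → θ x = 0) (hpθ' : ∀ x : ℤ, p' x = 0 → θ' x = 0)
    (hrκ : ∀ x : ℤ, r x = 0 → κ x = 0) (hrκ' : ∀ x : ℤ, r' x = 0 → κ' x = 0)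
    (V V' : H ≃ₗᵢ[ℂ] H)
    (hV : IsUprtk p r θ κ V) (hV' : IsUprtk p' r' θ' κ' V') :
    (∃ W : H ≃ₗᵢ[ℂ] H,
        (∀ x : ℤ, 1 ≤ x → x ≤ y → (Hx x).map (W.toLinearEquiv : H →ₗ[ℂ] H) = Hx x) ∧
        (∀ ψ ∈ Hicc 1 y, W (V (W.symm ψ)) = V' ψ)) ↔
      (∀ x : ℤ, 1 ≤ x → x ≤ y →
        p x = p' x ∧ r x = r' x ∧ θ x = θ' x ∧ κ x = κ' x) :=
  unitary_equiv_iff_case_four_general y hy p p' r r' θ θ' κ κ' hp hp' hr hr' hθ hθ' hκ hκ' hp0 hp0'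
    hpy hθ0 hθ0' hq hpθ hpθ' hrκ hrκ' V V' hV hV'
end
end

section
/- For all sequences p, r : ℤ → [0,1], the quantum walk U_{p,r,θ,κ} with θ_x = κ_x = 0 for all x ∈ ℤ (i.e., U_{p,r,0,0}) has chiral symmetry: there exists a self-adjoint unitary operator Γ on H such that Γ U_{p,r,0,0} Γ = (U_{p,r,0,0})*. -/
noncomputable section

/-!
The chiral symmetry is the site-wise reflection coin `Γ`, acting on each `H_x` by the
matrix `[[r_x, s_x], [s_x, -r_x]]` (written `[[cos φ_x, sin φ_x], [sin φ_x, -cos φ_x]]` with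
`φ_x = arccos r_x`); it is a self-adjoint involution. By the defining relations of `U = U_{p,r,0,0}`,
`UΓ` sends `e₁ˣ ↦ p_x e₁ˣ + q_x e₂^{x+1}` and `e₂^{x+1} ↦ q_x e₁ˣ - p_x e₂^{x+1}`, so `UΓ` is again a
reflection on each pair `(e₁ˣ, e₂^{x+1})`. Hence `(UΓ)² = 1`, i.e. `ΓUΓ = U*`.
-/

open scoped ENNReal

theorem Memℓp.of_norm_le {α : Type*} {E F : α → Type*} [∀ i, NormedAddCommGroup (E i)]
    [∀ i, NormedAddCommGroup (F i)] {p : ℝ≥0∞} (hp : 0 < p.toReal) {f : ∀ i, E i} {g : ∀ i, F i}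
    (hg : Memℓp g p) (h : ∀ i, ‖f i‖ ≤ ‖g i‖) : Memℓp f p :=
  (memℓp_gen_iff hp).2 <| ((memℓp_gen_iff hp).1 hg).of_nonneg_of_le (fun _ => by positivity)
    fun i => Real.rpow_le_rpow (norm_nonneg _) (h i) hp.le

theorem Memℓp.comp_equiv {α β : Type*} {E : Type*} [NormedAddCommGroup E] {p : ℝ≥0∞}
    (hp : 0 < p.toReal) {f : α → E} (hf : Memℓp f p) (σ : β ≃ α) : Memℓp (f ∘ σ) p :=
  (memℓp_gen_iff hp).2 <| ((memℓp_gen_iff hp).1 hf).comp_injective σ.injective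

theorem apply_apply_of_reflection {R M F : Type*} [CommRing R] [AddCommGroup M] [Module R M]
    [FunLike F M M] [LinearMapClass F R M M] (T : F) {a b : R} (hab : a ^ 2 + b ^ 2 = 1)
    {u v : M} (hu : T u = a • u + b • v) (hv : T v = b • u - a • v) :
    T (T u) = u ∧ T (T v) = v := by
  rw [hu, hv, map_add, map_sub, map_smul, map_smul, map_smul, map_smul, hu, hv]
  constructor
  · linear_combination (norm := module) hab • u
  · linear_combination (norm := module) hab • v

theorem mul_mul_eq_star_of_mul_mul_self_eq_one {R : Type*} [Monoid R] [StarMul R] {U Γ : R}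
    (hU : U ∈ unitary R) (h : U * Γ * (U * Γ) = 1) : Γ * U * Γ = star U := by
  calc Γ * U * Γ = star U * (U * Γ * (U * Γ)) := by
        rw [← mul_assoc, ← mul_assoc, ← mul_assoc, Unitary.star_mul_self_of_mem hU, one_mul,
          mul_assoc]
    _ = star U := by rw [h, mul_one]

namespace Chiral

open Real

def coinFun (φ : ℤ → ℝ) (f : ℤ × Fin 2 → ℂ) (q : ℤ × Fin 2) : ℂ :=
  if q.2 = 0 then (cos (φ q.1) : ℂ) * f (q.1, 0) + (sin (φ q.1) : ℂ) * f (q.1, 1)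
  else (sin (φ q.1) : ℂ) * f (q.1, 0) - (cos (φ q.1) : ℂ) * f (q.1, 1)

theorem norm_coinFun_le (φ : ℤ → ℝ) (f : ℤ × Fin 2 → ℂ) (q : ℤ × Fin 2) :
    ‖coinFun φ f q‖ ≤ ‖f (q.1, 0)‖ + ‖f (q.1, 1)‖ := by
  have hcos : ‖(cos (φ q.1) : ℂ)‖ ≤ 1 := by rw [Complex.norm_real]; exact abs_cos_le_one _
  have hsin : ‖(sin (φ q.1) : ℂ)‖ ≤ 1 := by rw [Complex.norm_real]; exact abs_sin_le_one _
  have h0 := norm_nonneg (f (q.1, 0))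
  have h1 := norm_nonneg (f (q.1, 1))
  unfold coinFun
  split
  · refine (norm_add_le _ _).trans ?_
    rw [norm_mul, norm_mul]
    nlinarith
  · refine (norm_sub_le _ _).trans ?_
    rw [norm_mul, norm_mul]
    nlinarith

theorem memℓp_coinFun (φ : ℤ → ℝ) (f : H) : Memℓp (coinFun φ f) 2 := by
  let σ : ℤ × Fin 2 ≃ ℤ × Fin 2 := (Equiv.refl ℤ).prodCongr Fin.revPerm
  have hσ : Memℓp (fun q => ‖f q‖ + ‖f (σ q)‖) 2 :=
    (memℓp_norm_iff.2 (lp.memℓp f)).add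
      (memℓp_norm_iff.2 ((lp.memℓp f).comp_equiv (by norm_num) σ))
  refine hσ.of_norm_le (by norm_num) fun q => ?_
  obtain ⟨x, i⟩ := q
  refine (norm_coinFun_le φ f (x, i)).trans (le_of_eq ?_)
  rw [Real.norm_of_nonneg (by positivity)]
  fin_cases i
  · rfl
  · exact add_comm _ _

def coinLinear (φ : ℤ → ℝ) : H →ₗ[ℂ] H where
  toFun f := ⟨coinFun φ f, memℓp_coinFun φ f⟩
  map_add' f g := by
    refine lp.ext (funext fun q => ?_)
    simp only [lp.coeFn_add, Pi.add_apply, coinFun]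
    split <;> ring
  map_smul' c f := by
    refine lp.ext (funext fun q => ?_)
    simp only [lp.coeFn_smul, Pi.smul_apply, coinFun, RingHom.id_apply, smul_eq_mul]
    split <;> ring

theorem coinLinear_apply_coe (φ : ℤ → ℝ) (f : H) : ⇑(coinLinear φ f) = coinFun φ f := rfl

theorem coinLinear_isSymmetric (φ : ℤ → ℝ) : (coinLinear φ).IsSymmetric := by
  intro u v
  rw [lp.inner_eq_tsum, lp.inner_eq_tsum,
    (lp.hasSum_inner (𝕜 := ℂ) (coinLinear φ u) v).summable.tsum_prod,
    (lp.hasSum_inner (𝕜 := ℂ) u (coinLinear φ v)).summable.tsum_prod]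
  refine tsum_congr fun x => ?_
  rw [tsum_fintype, tsum_fintype, Fin.sum_univ_two, Fin.sum_univ_two]
  simp only [coinLinear_apply_coe, coinFun, RCLike.inner_apply, Fin.isValue, ↓reduceIte,
    one_ne_zero, map_add, map_sub, map_mul, Complex.conj_ofReal]
  ring

/-- Bounded by the Hellinger–Toeplitz theorem, since `coinLinear φ` is symmetric. -/
def coin (φ : ℤ → ℝ) : H →L[ℂ] H := (coinLinear_isSymmetric φ).toSelfAdjoint

theorem coin_isSelfAdjoint (φ : ℤ → ℝ) : IsSelfAdjoint (coin φ) :=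
  (coinLinear_isSymmetric φ).toSelfAdjoint.2

theorem coin_apply_coe (φ : ℤ → ℝ) (f : H) : ⇑(coin φ f) = coinFun φ f := rfl

theorem coin_e_zero (φ : ℤ → ℝ) (x : ℤ) :
    coin φ (e x 0) = (cos (φ x) : ℂ) • e x 0 + (sin (φ x) : ℂ) • e x 1 := by
  refine lp.ext (funext fun ⟨y, j⟩ => ?_)
  simp only [coin_apply_coe, lp.coeFn_add, lp.coeFn_smul, Pi.add_apply, Pi.smul_apply]
  fin_cases j <;> by_cases hy : y = x <;> simp [coinFun, e, lp.single_apply, hy]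

theorem coin_e_one (φ : ℤ → ℝ) (x : ℤ) :
    coin φ (e x 1) = (sin (φ x) : ℂ) • e x 0 - (cos (φ x) : ℂ) • e x 1 := by
  refine lp.ext (funext fun ⟨y, j⟩ => ?_)
  simp only [coin_apply_coe, lp.coeFn_sub, lp.coeFn_smul, Pi.sub_apply, Pi.smul_apply]
  fin_cases j <;> by_cases hy : y = x <;> simp [coinFun, e, lp.single_apply, hy]

theorem ext_e {A B : H →L[ℂ] H} (h : ∀ x i, A (e x i) = B (e x i)) : A = B :=
  lp.ext_continuousLinearMap (by norm_num) fun q => ContinuousLinearMap.ext_ring (h q.1 q.2)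

theorem clm_mem_unitary (V : H ≃ₗᵢ[ℂ] H) : clm V ∈ unitary (H →L[ℂ] H) :=
  (Unitary.linearIsometryEquiv.symm V).2

theorem coin_mul_self (φ : ℤ → ℝ) : coin φ * coin φ = 1 := by
  refine ext_e fun x i => ?_
  have hφ : (cos (φ x) : ℂ) ^ 2 + (sin (φ x) : ℂ) ^ 2 = 1 := by exact_mod_cast cos_sq_add_sin_sq _
  have h := apply_apply_of_reflection (coin φ) hφ (coin_e_zero φ x) (coin_e_one φ x)
  fin_cases i
  · exact h.1
  · exact h.2

theorem coin_mem_unitary (φ : ℤ → ℝ) : coin φ ∈ unitary (H →L[ℂ] H) := by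
  rw [Unitary.mem_iff, (coin_isSelfAdjoint φ).star_eq, coin_mul_self]
  exact ⟨rfl, rfl⟩

theorem sq_add_sq_sqrt_one_sub_sq {t : ℝ} (ht : t ^ 2 ≤ 1) :
    (t : ℂ) ^ 2 + (√(1 - t ^ 2) : ℂ) ^ 2 = 1 := by
  exact_mod_cast (by rw [sq_sqrt (sub_nonneg.2 ht)]; ring : t ^ 2 + √(1 - t ^ 2) ^ 2 = 1)

theorem coin_arccos_e {r : ℤ → ℝ} {x : ℤ} (h₁ : -1 ≤ r x) (h₂ : r x ≤ 1) :
    coin (fun y => arccos (r y)) (e x 0) = (r x : ℂ) • e x 0 + (√(1 - r x ^ 2) : ℂ) • e x 1 ∧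
    coin (fun y => arccos (r y)) (e x 1) = (√(1 - r x ^ 2) : ℂ) • e x 0 - (r x : ℂ) • e x 1 := by
  rw [coin_e_zero, coin_e_one, cos_arccos h₁ h₂, sin_arccos]
  exact ⟨rfl, rfl⟩

theorem mul_coin_arccos_e {p r : ℤ → ℝ} (hr : ∀ x, r x ∈ Set.Icc (0 : ℝ) 1) {V : H ≃ₗᵢ[ℂ] H}
    (hV : IsUprtk p r (fun _ => 0) (fun _ => 0) V) (x : ℤ) :
    (clm V * coin (fun y => arccos (r y))) (e x 0)
      = (p x : ℂ) • e x 0 + (√(1 - p x ^ 2) : ℂ) • e (x + 1) 1 ∧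
    (clm V * coin (fun y => arccos (r y))) (e (x + 1) 1)
      = (√(1 - p x ^ 2) : ℂ) • e x 0 - (p x : ℂ) • e (x + 1) 1 := by
  have h0 := (hV x).1
  have h1 := (hV (x + 1)).2
  simp only [Complex.ofReal_zero, mul_zero, neg_zero, Complex.exp_zero, one_mul,
    add_sub_cancel_right] at h0 h1
  have hr₁ (y : ℤ) : -1 ≤ r y := by linarith [(hr y).1]
  rw [mul_apply_eq_comp, mul_apply_eq_comp, (coin_arccos_e (hr₁ x) (hr x).2).1,
    (coin_arccos_e (hr₁ (x + 1)) (hr (x + 1)).2).2]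
  exact ⟨h0, h1⟩

end Chiral

/-- **Proposition 4.3.** The quantum walk `U_{p,r,0,0}`
(i.e. `θ = κ = 0`) has chiral symmetry: there is a self-adjoint unitary `Γ`
on `H` with `Γ U_{p,r,0,0} Γ = (U_{p,r,0,0})*`. -/
theorem Uprtk_chiral_symmetry (p r : ℤ → ℝ)
    (hp : ∀ x : ℤ, p x ∈ Set.Icc (0 : ℝ) 1) (hr : ∀ x : ℤ, r x ∈ Set.Icc (0 : ℝ) 1)
    (V : H ≃ₗᵢ[ℂ] H)
    (hV : IsUprtk p r (fun _ => 0) (fun _ => 0) V) :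
    ∃ Γ : H →L[ℂ] H, Γ ∈ unitary (H →L[ℂ] H) ∧ IsSelfAdjoint Γ ∧
      Γ * (clm V) * Γ = star (clm V) := by
  open Chiral in
  refine ⟨coin fun x => Real.arccos (r x), coin_mem_unitary _, coin_isSelfAdjoint _,
    mul_mul_eq_star_of_mul_mul_self_eq_one (clm_mem_unitary V) (ext_e fun x i => ?_)⟩
  have hpq (y : ℤ) := sq_add_sq_sqrt_one_sub_sq (pow_le_one₀ (n := 2) (hp y).1 (hp y).2)
  fin_cases i
  · have hx := mul_coin_arccos_e hr hV x
    exact (apply_apply_of_reflection _ (hpq x) hx.1 hx.2).1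
  · have hx := mul_coin_arccos_e hr hV (x - 1)
    rw [sub_add_cancel] at hx
    exact (apply_apply_of_reflection _ (hpq (x - 1)) hx.1 hx.2).2
end
end

section
/- Let p, a : ℤ → ℝ and q, b : ℤ → ℂ satisfy p_x² + |q_x|² = 1 and a_x² + |b_x|² = 1 for all x ∈ ℤ, and let U be the associated Suzuki split-step quantum walk. Then U is unitarily equivalent to U_{p,a}, the operator obtained from the same data with q_x and b_x replaced by their moduli |q_x| and |b_x|. -/
/-!
Conjugation by a diagonal unitary `W eᵢˣ = μ_{x,i} eᵢˣ` with unimodular `μ` only rotates the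
phases of the coin vectors and of the shift amplitudes. Write `b_x = |b_x| φ(b_x)` and
`q_x = |q_x| φ(q_x)` with `|φ| = 1`, and solve `γ_{x+1} = γ_x φ(q_x) φ(b_{x+1})` along `ℤ`.
Then `μ_{x,0} = γ_x`, `μ_{x,1} = γ_x / φ(b_x)` makes `W U W⁻¹` act on the coin basis
`{a_x e₁ˣ + |b_x| e₂ˣ, |b_x| e₁ˣ − a_x e₂ˣ}` of every `H_x` exactly as `U_{p,a}` does, and
`a_x² + |b_x|² = 1` makes these bases span `H`.
-/

noncomputable section

/-- `U` is the Suzuki split-step quantum walk with data `p, a : ℤ → ℝ`,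
`q, b : ℤ → ℂ`: it sends `a_x e₁ˣ + b_x e₂ˣ` to `p_x e₁ˣ + conj(q_x) e₂^{x+1}`
and `conj(b_x) e₁ˣ − a_x e₂ˣ` to `q_{x−1} e₁^{x−1} − p_{x−1} e₂ˣ`. -/
def IsSuzuki (p a : ℤ → ℝ) (q b : ℤ → ℂ) (U : H ≃ₗᵢ[ℂ] H) : Prop :=
  ∀ x : ℤ,
    U ((a x : ℂ) • e x 0 + (b x) • e x 1)
      = (p x : ℂ) • e x 0 + (starRingEnd ℂ) (q x) • e (x + 1) 1 ∧
    U ((starRingEnd ℂ) (b x) • e x 0 - (a x : ℂ) • e x 1)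
      = (q (x - 1)) • e (x - 1) 0 - (p (x - 1) : ℂ) • e x 1

open ComplexConjugate
open scoped ENNReal

theorem Int.exists_forall_add_one_eq_mul {G : Type*} [Group G] (s : ℤ → G) :
    ∃ γ : ℤ → G, ∀ x, γ (x + 1) = γ x * s x := by
  refine ⟨fun z => Int.inductionOn' (motive := fun _ => G) z 0 1 (fun k _ g => g * s k)
    (fun k _ g => g * (s (k - 1))⁻¹), fun x => ?_⟩
  rcases le_or_gt 0 x with hx | hx
  · exact Int.inductionOn'_add_one hx
  · have h := Int.inductionOn'_sub_one (motive := fun _ => G) (zero := 1)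
      (succ := fun k _ g => g * s k) (pred := fun k _ g => g * (s (k - 1))⁻¹)
      (show x + 1 ≤ 0 by omega)
    dsimp only at h ⊢
    rw [add_sub_cancel_right] at h
    rw [h, inv_mul_cancel_right]

namespace lp

variable {α : Type*} {E : α → Type*} [∀ i, NormedAddCommGroup (E i)] [∀ i, NormedSpace ℂ (E i)]
  {p : ℝ≥0∞}

theorem memℓp_circle_smul (μ : α → Circle) (f : lp E p) : Memℓp (fun i => μ i • f i) p :=
  memℓp_norm_iff.1 (by simpa only [Circle.norm_smul] using memℓp_norm_iff.2 (lp.memℓp f))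

variable [Fact (1 ≤ p)]

def circleSMul (μ : α → Circle) : lp E p ≃ₗᵢ[ℂ] lp E p where
  toFun f := ⟨fun i => μ i • f i, memℓp_circle_smul μ f⟩
  invFun f := ⟨fun i => (μ i)⁻¹ • f i, memℓp_circle_smul _ f⟩
  map_add' f g := lp.ext <| funext fun i => smul_add (μ i) (f i) (g i)
  map_smul' c f := lp.ext <| funext fun i => smul_comm (μ i) c (f i)
  left_inv f := lp.ext <| funext fun i => inv_smul_smul (μ i) (f i)
  right_inv f := lp.ext <| funext fun i => smul_inv_smul (μ i) (f i)
  norm_map' f := by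
    have hp : p ≠ 0 := (zero_lt_one.trans_le Fact.out).ne'
    exact le_antisymm (norm_mono hp fun i => (Circle.norm_smul _ _).le)
      (norm_mono hp fun i => (Circle.norm_smul _ _).ge)

theorem circleSMul_single [DecidableEq α] (μ : α → Circle) (i : α) (v : E i) :
    circleSMul μ (lp.single p i v) = lp.single p i (μ i • v) := by
  ext j
  by_cases h : j = i
  · subst h; simp [circleSMul]
  · simp [circleSMul, h]

end lp

def phase (z : ℂ) : Circle := Circle.exp (Complex.arg z)

theorem norm_mul_phase (z : ℂ) : (‖z‖ : ℂ) * phase z = z := by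
  simpa only [phase, Circle.coe_exp] using Complex.norm_mul_exp_arg_mul_I z

theorem conj_mul_phase (z : ℂ) : conj z * phase z = ‖z‖ := by
  have h := congrArg (starRingEnd ℂ) (norm_mul_phase z)
  rw [map_mul, Complex.conj_ofReal, ← Circle.coe_inv_eq_conj] at h
  rw [← h, mul_assoc, ← Circle.coe_mul, inv_mul_cancel, Circle.coe_one, mul_one]

theorem circleSMul_e (μ : ℤ × Fin 2 → Circle) (x : ℤ) (i : Fin 2) :
    lp.circleSMul μ (e x i) = (μ (x, i) : ℂ) • e x i := by
  rw [e, lp.circleSMul_single, Circle.smul_def, lp.single_smul]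

theorem map_circleSMul_Hx (μ : ℤ × Fin 2 → Circle) (x : ℤ) :
    (Hx x).map (lp.circleSMul μ).toLinearEquiv.toLinearMap = Hx x := by
  rw [Hx, Submodule.map_span, Set.image_pair]
  simp only [LinearEquiv.coe_coe, LinearIsometryEquiv.coe_toLinearEquiv, circleSMul_e,
    Submodule.span_insert, Submodule.span_singleton_smul_eq (Circle.coe_ne_zero _).isUnit]

theorem H_ext {S T : H ≃ₗᵢ[ℂ] H} (h : ∀ x i, S (e x i) = T (e x i)) : S = T := by
  have : (S : H →L[ℂ] H) = T := lp.ext_continuousLinearMap ENNReal.ofNat_ne_top fun k =>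
    ContinuousLinearMap.ext fun c => by
      have hc : lp.single 2 k c = c • e k.1 k.2 := by
        rw [e, ← lp.single_smul, smul_eq_mul, mul_one]
      simp [hc, h]
  exact LinearIsometryEquiv.ext fun f => congrArg (· f) this

theorem H_ext_of_coin (a : ℤ → ℝ) (b : ℤ → ℂ) (hab : ∀ x, a x ^ 2 + ‖b x‖ ^ 2 = 1)
    {S T : H ≃ₗᵢ[ℂ] H}
    (h₁ : ∀ x, S ((a x : ℂ) • e x 0 + b x • e x 1) = T ((a x : ℂ) • e x 0 + b x • e x 1))
    (h₂ : ∀ x, S (conj (b x) • e x 0 - (a x : ℂ) • e x 1)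
      = T (conj (b x) • e x 0 - (a x : ℂ) • e x 1)) :
    S = T := by
  refine H_ext fun x => Fin.forall_fin_two.2 ?_
  have hab' : (a x : ℂ) ^ 2 + b x * conj (b x) = 1 := by
    rw [Complex.mul_conj, Complex.normSq_eq_norm_sq]; exact_mod_cast hab x
  have he₀ : e x 0 = (a x : ℂ) • ((a x : ℂ) • e x 0 + b x • e x 1)
      + b x • (conj (b x) • e x 0 - (a x : ℂ) • e x 1) := by
    match_scalars
    · linear_combination -hab'
    · ring
  have he₁ : e x 1 = conj (b x) • ((a x : ℂ) • e x 0 + b x • e x 1)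
      - (a x : ℂ) • (conj (b x) • e x 0 - (a x : ℂ) • e x 1) := by
    match_scalars
    · linear_combination -hab'
    · ring
  constructor
  · rw [he₀, map_add, map_add, map_smul, map_smul, map_smul, map_smul, h₁, h₂]
  · rw [he₁, map_sub, map_sub, map_smul, map_smul, map_smul, map_smul, h₁, h₂]

def suzukiGauge (γ : ℤ → Circle) (b : ℤ → ℂ) : ℤ × Fin 2 → Circle :=
  fun k => ![γ k.1, γ k.1 / phase (b k.1)] k.2

section Gauge

variable (p a : ℤ → ℝ) (q b : ℤ → ℂ) {γ : ℤ → Circle}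

theorem suzukiGauge_zero (x : ℤ) : suzukiGauge γ b (x, 0) = γ x := rfl

theorem suzukiGauge_one (x : ℤ) : suzukiGauge γ b (x, 1) = γ x / phase (b x) := rfl

theorem suzukiGauge_add_one_one (hγ : ∀ x, γ (x + 1) = γ x * (phase (q x) * phase (b (x + 1))))
    (x : ℤ) : suzukiGauge γ b (x + 1, 1) = γ x * phase (q x) := by
  rw [suzukiGauge_one, hγ, ← mul_assoc, mul_div_cancel_right]

theorem circleSMul_suzukiGauge_coin₁ (x : ℤ) :
    lp.circleSMul (suzukiGauge γ b) ((a x : ℂ) • e x 0 + b x • e x 1)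
      = (γ x : ℂ) • ((a x : ℂ) • e x 0 + (‖b x‖ : ℂ) • e x 1) := by
  rw [map_add, map_smul, map_smul, circleSMul_e, circleSMul_e, suzukiGauge_zero,
    suzukiGauge_one, Circle.coe_div]
  match_scalars
  · ring
  · field_simp
    linear_combination -norm_mul_phase (b x)

theorem circleSMul_suzukiGauge_coin₂ (x : ℤ) :
    lp.circleSMul (suzukiGauge γ b) (conj (b x) • e x 0 - (a x : ℂ) • e x 1)
      = (suzukiGauge γ b (x, 1) : ℂ) • ((‖b x‖ : ℂ) • e x 0 - (a x : ℂ) • e x 1) := by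
  rw [map_sub, map_smul, map_smul, circleSMul_e, circleSMul_e, suzukiGauge_zero,
    suzukiGauge_one, Circle.coe_div]
  match_scalars
  · field_simp
    exact conj_mul_phase (b x)
  · ring

theorem circleSMul_suzukiGauge_shift₁
    (hγ : ∀ x, γ (x + 1) = γ x * (phase (q x) * phase (b (x + 1)))) (x : ℤ) :
    lp.circleSMul (suzukiGauge γ b) ((p x : ℂ) • e x 0 + conj (q x) • e (x + 1) 1)
      = (γ x : ℂ) • ((p x : ℂ) • e x 0 + (‖q x‖ : ℂ) • e (x + 1) 1) := by
  rw [map_add, map_smul, map_smul, circleSMul_e, circleSMul_e, suzukiGauge_zero,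
    suzukiGauge_add_one_one q b hγ, Circle.coe_mul]
  match_scalars
  · ring
  · linear_combination (γ x : ℂ) * conj_mul_phase (q x)

theorem circleSMul_suzukiGauge_shift₂
    (hγ : ∀ x, γ (x + 1) = γ x * (phase (q x) * phase (b (x + 1)))) (x : ℤ) :
    lp.circleSMul (suzukiGauge γ b) (q (x - 1) • e (x - 1) 0 - (p (x - 1) : ℂ) • e x 1)
      = (suzukiGauge γ b (x, 1) : ℂ)
        • ((‖q (x - 1)‖ : ℂ) • e (x - 1) 0 - (p (x - 1) : ℂ) • e x 1) := by
  have h := suzukiGauge_add_one_one q b hγ (x - 1)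
  rw [sub_add_cancel] at h
  rw [map_sub, map_smul, map_smul, circleSMul_e, circleSMul_e, suzukiGauge_zero, h,
    Circle.coe_mul]
  match_scalars
  · linear_combination -(γ (x - 1) : ℂ) * norm_mul_phase (q (x - 1))
  · ring

end Gauge

theorem suzuki_equiv_modulus_general (p a : ℤ → ℝ) (q b : ℤ → ℂ)
    (hab : ∀ x : ℤ, (a x) ^ 2 + ‖b x‖ ^ 2 = 1)
    (U V : H ≃ₗᵢ[ℂ] H)
    (hU : IsSuzuki p a q b U)
    (hV : IsSuzuki p a (fun x => (‖q x‖ : ℂ))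
      (fun x => (‖b x‖ : ℂ)) V) :
    UnitEquiv U V := by
  obtain ⟨γ, hγ⟩ := Int.exists_forall_add_one_eq_mul fun x => phase (q x) * phase (b (x + 1))
  let W : H ≃ₗᵢ[ℂ] H := lp.circleSMul (suzukiGauge γ b)
  have hV' : ∀ x, V ((a x : ℂ) • e x 0 + (‖b x‖ : ℂ) • e x 1)
        = (p x : ℂ) • e x 0 + (‖q x‖ : ℂ) • e (x + 1) 1 ∧
      V ((‖b x‖ : ℂ) • e x 0 - (a x : ℂ) • e x 1)
        = (‖q (x - 1)‖ : ℂ) • e (x - 1) 0 - (p (x - 1) : ℂ) • e x 1 := by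
    simpa only [IsSuzuki, Complex.conj_ofReal] using hV
  have hWV : W.trans V = U.trans W := by
    refine H_ext_of_coin a b hab (fun x => ?_) (fun x => ?_)
    · simp only [LinearIsometryEquiv.trans_apply, W, circleSMul_suzukiGauge_coin₁, map_smul,
        (hV' x).1, (hU x).1, circleSMul_suzukiGauge_shift₁ p q b hγ]
    · simp only [LinearIsometryEquiv.trans_apply, W, circleSMul_suzukiGauge_coin₂, map_smul,
        (hV' x).2, (hU x).2, circleSMul_suzukiGauge_shift₂ p q b hγ]
  refine ⟨W, map_circleSMul_Hx _, LinearIsometryEquiv.ext fun f => ?_⟩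
  simpa only [LinearIsometryEquiv.trans_apply, LinearIsometryEquiv.apply_symm_apply]
    using congrArg (· (W.symm f)) hWV

/-- **Corollary 4.4.** A Suzuki split-step quantum walk with
data `p, a, q, b` is unitarily equivalent to `U_{p,a}`, the Suzuki walk
obtained by replacing `q_x` and `b_x` with their moduli `|q_x|` and `|b_x|`. -/
theorem suzuki_equiv_modulus (p a : ℤ → ℝ) (q b : ℤ → ℂ)
    (hpq : ∀ x : ℤ, (p x) ^ 2 + ‖q x‖ ^ 2 = 1)
    (hab : ∀ x : ℤ, (a x) ^ 2 + ‖b x‖ ^ 2 = 1)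
    (U V : H ≃ₗᵢ[ℂ] H)
    (hU : IsSuzuki p a q b U)
    (hV : IsSuzuki p a (fun x => (‖q x‖ : ℂ))
      (fun x => (‖b x‖ : ℂ)) V) :
    UnitEquiv U V :=
  suzuki_equiv_modulus_general p a q b hab U V hU hV
end
end
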